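/- arXiv:1811.03398 — 3 statements merged into one kernel-verified Lean document; each statement's English description precedes it below -/
import Mathlib

section
/- For q(z) = (1+Az)/(1+Bz) with -1 ≤ B < A ≤ 1, the quantity 1 + z q''(z)/q'(z) - z q'(z)/q(z) equals (1 - A B z²)/((1+Az)(1+Bz)), and its real part is strictly positive for all z in the open unit disk. -/
open Complex Metric Topology

/-! The expression equals `(1 + Az)⁻¹ + (1 + Bz)⁻¹ - 1`, and `w ↦ (1 + w)⁻¹` maps the unit disk
into the half-plane `Re > 1/2`, so its real part exceeds `1/2 + 1/2 - 1 = 0`. -/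

theorem one_add_ne_zero_of_norm_lt_one {𝕜 : Type*} [NormedField 𝕜] {w : 𝕜} (hw : ‖w‖ < 1) :
    1 + w ≠ 0 := by
  intro h
  rw [add_eq_zero_iff_eq_neg'] at h
  simp [h] at hw

theorem norm_mul_lt_one {𝕜 : Type*} [NormedField 𝕜] {c z : 𝕜} (hc : ‖c‖ ≤ 1) (hz : ‖z‖ < 1) :
    ‖c * z‖ < 1 := by
  rw [norm_mul]
  nlinarith [norm_nonneg c, norm_nonneg z]

/-- `Re (1 + w)⁻¹ - 1/2 = (1 - ‖w‖²) / (2 ‖1 + w‖²)`. -/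
theorem half_lt_re_inv_one_add {w : ℂ} (hw : ‖w‖ < 1) : 1 / 2 < (1 + w)⁻¹.re := by
  have hpos : 0 < normSq (1 + w) := normSq_pos.mpr (one_add_ne_zero_of_norm_lt_one hw)
  have hw2 : normSq w < 1 := by rw [normSq_eq_norm_sq]; nlinarith [norm_nonneg w]
  have hexp : normSq (1 + w) = 1 + 2 * w.re + normSq w := by
    simp only [normSq_apply, add_re, add_im, one_re, one_im]; ring
  rw [inv_re, lt_div_iff₀ hpos, hexp, add_re, one_re]
  linarith

section Mobius

variable {𝕜 : Type*} [NontriviallyNormedField 𝕜] (a b : 𝕜) {w : 𝕜}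

theorem hasDerivAt_one_add_mul : HasDerivAt (fun w => 1 + a * w) a w := by
  simpa using ((hasDerivAt_id w).const_mul a).const_add 1

theorem hasDerivAt_mobius (hw : 1 + b * w ≠ 0) :
    HasDerivAt (fun w => (1 + a * w) / (1 + b * w)) ((a - b) / (1 + b * w) ^ 2) w :=
  ((hasDerivAt_one_add_mul a).div (hasDerivAt_one_add_mul b) hw).congr_deriv (by ring)

theorem deriv_mobius (hw : 1 + b * w ≠ 0) :
    deriv (fun w => (1 + a * w) / (1 + b * w)) w = (a - b) / (1 + b * w) ^ 2 :=
  (hasDerivAt_mobius a b hw).deriv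

theorem deriv_deriv_mobius (hw : 1 + b * w ≠ 0) :
    deriv (deriv fun w => (1 + a * w) / (1 + b * w)) w = -2 * b * (a - b) / (1 + b * w) ^ 3 := by
  have hcont : Continuous fun w : 𝕜 => 1 + b * w := by fun_prop
  have heq : deriv (fun w => (1 + a * w) / (1 + b * w)) =ᶠ[𝓝 w]
      fun w => (a - b) / (1 + b * w) ^ 2 := by
    filter_upwards [hcont.continuousAt.eventually_ne hw] with v hv
    exact deriv_mobius a b hv
  rw [heq.deriv_eq]
  refine HasDerivAt.deriv ?_
  exact ((hasDerivAt_const w (a - b)).div ((hasDerivAt_one_add_mul b).pow 2)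
    (pow_ne_zero 2 hw)).congr_deriv (by simp only [Pi.pow_apply]; field_simp; ring)

theorem one_add_mul_deriv_deriv_div_sub_mul_deriv_div_mobius {f : 𝕜 → 𝕜}
    (hf : ∀ w, f w = (1 + a * w) / (1 + b * w)) (hab : a ≠ b)
    (ha : 1 + a * w ≠ 0) (hb : 1 + b * w ≠ 0) :
    1 + w * deriv (deriv f) w / deriv f w - w * deriv f w / f w
      = (1 - a * b * w ^ 2) / ((1 + a * w) * (1 + b * w)) := by
  obtain rfl : f = fun w => (1 + a * w) / (1 + b * w) := funext hf
  rw [deriv_deriv_mobius a b hb, deriv_mobius a b hb]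
  have hab' : a - b ≠ 0 := sub_ne_zero.mpr hab
  -- `field_simp` normalizes `1 + a * w` to `1 + w * a` and only then looks for the side conditions.
  rw [mul_comm a w] at ha
  rw [mul_comm b w] at hb
  field_simp
  ring

end Mobius

theorem stmt_1 (A B : ℝ) (hB : -1 ≤ B) (hAB : B < A) (hA : A ≤ 1)
    (q : ℂ → ℂ) (hq : ∀ z, q z = (1 + (A : ℂ) * z) / (1 + (B : ℂ) * z)) :
    ∀ z ∈ ball (0 : ℂ) 1,
      1 + z * deriv (deriv q) z / deriv q z - z * deriv q z / q z
        = (1 - (A : ℂ) * B * z ^ 2) / ((1 + (A : ℂ) * z) * (1 + (B : ℂ) * z)) ∧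
      0 < ((1 - (A : ℂ) * B * z ^ 2) / ((1 + (A : ℂ) * z) * (1 + (B : ℂ) * z))).re := by
  intro z hz
  have hz : ‖z‖ < 1 := mem_ball_zero_iff.mp hz
  have hAz : ‖(A : ℂ) * z‖ < 1 :=
    norm_mul_lt_one (by rw [norm_real, Real.norm_eq_abs, abs_le]; constructor <;> linarith) hz
  have hBz : ‖(B : ℂ) * z‖ < 1 :=
    norm_mul_lt_one (by rw [norm_real, Real.norm_eq_abs, abs_le]; constructor <;> linarith) hz
  have hA0 := one_add_ne_zero_of_norm_lt_one hAz
  have hB0 := one_add_ne_zero_of_norm_lt_one hBz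
  have hAB0 : (A : ℂ) ≠ B := ofReal_injective.ne hAB.ne'
  have hsplit : (1 - (A : ℂ) * B * z ^ 2) / ((1 + (A : ℂ) * z) * (1 + (B : ℂ) * z))
      = (1 + (A : ℂ) * z)⁻¹ + (1 + (B : ℂ) * z)⁻¹ - 1 := by
    field_simp
    ring
  refine ⟨one_add_mul_deriv_deriv_div_sub_mul_deriv_div_mobius _ _ hq hAB0 hA0 hB0, ?_⟩
  rw [hsplit, sub_re, add_re, one_re]
  linarith [half_lt_re_inv_one_add hAz, half_lt_re_inv_one_add hBz]
end

section
/- Let q be analytic on the open unit disk with q(0) ≠ 0 and q'(z) ≠ 0 for all z in the disk. If Re(1 + z q''(z)/q'(z) - z q'(z)/q(z)) > 0 for all z in the open unit disk (interpreting the expression where q(z) ≠ 0), then q(z) ≠ 0 for all z in the open unit disk. -/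
open Complex Metric Filter Topology

/-! If `q` vanished at some `z₀` in the disk, then `z₀ ≠ 0` and the zero is simple, so
`z q'(z)/q(z)` behaves like `z/(z - z₀)` near `z₀`. Along the ray `z = (1 + t) z₀`, `t → 0⁺`,
its real part grows like `(1 + t)/t → +∞`, while `1 + z q''(z)/q'(z)` stays bounded; hence the
real part in the hypothesis eventually becomes negative at points where `q ≠ 0`. -/

theorem tendsto_sub_mul_deriv_div_nhdsNE {𝕜 : Type*} [NontriviallyNormedField 𝕜] {f : 𝕜 → 𝕜}
    {z₀ : 𝕜} (hf : DifferentiableAt 𝕜 f z₀) (hf' : ContinuousAt (deriv f) z₀) (h0 : f z₀ = 0)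
    (hd : deriv f z₀ ≠ 0) :
    Tendsto (fun z => (z - z₀) * deriv f z / f z) (𝓝[≠] z₀) (𝓝 1) := by
  have hslope : (fun z => (z - z₀) * deriv f z / f z) = fun z => deriv f z / slope f z₀ z := by
    ext z
    rw [slope_def_field, h0, sub_zero, div_div_eq_mul_div, mul_comm]
  rw [hslope, ← div_self hd]
  exact (hf'.tendsto.mono_left nhdsWithin_le_nhds).div
    (hasDerivAt_iff_tendsto_slope.1 hf.hasDerivAt) hd

theorem tendsto_add_smul_nhdsNE {E : Type*} [NormedAddCommGroup E] [NormedSpace ℝ E] (x : E)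
    {v : E} (hv : v ≠ 0) : Tendsto (fun t : ℝ => x + t • v) (𝓝[≠] 0) (𝓝[≠] x) := by
  refine tendsto_nhdsWithin_iff.2 ⟨?_, ?_⟩
  · have : ContinuousAt (fun t : ℝ => x + t • v) 0 := by fun_prop
    simpa using this.tendsto.mono_left nhdsWithin_le_nhds
  · filter_upwards [self_mem_nhdsWithin] with t ht
    simpa using smul_ne_zero ht hv

theorem tendsto_re_mul_deriv_div_atTop {f : ℂ → ℂ} {z₀ : ℂ} (hf : DifferentiableAt ℂ f z₀)
    (hf' : ContinuousAt (deriv f) z₀) (h0 : f z₀ = 0) (hd : deriv f z₀ ≠ 0) (hz₀ : z₀ ≠ 0) :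
    Tendsto (fun t : ℝ => ((z₀ + t • z₀) * deriv f (z₀ + t • z₀) / f (z₀ + t • z₀)).re)
      (𝓝[>] 0) atTop := by
  have hray := (tendsto_add_smul_nhdsNE z₀ hz₀).mono_left (nhdsGT_le_nhdsNE 0)
  have hL := (continuous_re.tendsto 1).comp
    ((tendsto_sub_mul_deriv_div_nhdsNE hf hf' h0 hd).comp hray)
  have hfactor : Tendsto (fun t : ℝ => 1 + t) (𝓝[>] 0) (𝓝 1) :=
    ((continuous_const_add 1).tendsto' 0 1 (add_zero 1)).mono_left nhdsWithin_le_nhds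
  refine (tendsto_inv_nhdsGT_zero.atTop_mul_pos one_pos
    (by simpa using hfactor.mul hL)).congr' ?_
  filter_upwards [self_mem_nhdsWithin] with t (ht : 0 < t)
  set w := z₀ + t • z₀
  have hw : ∀ a b : ℂ, w * a / b = ((t⁻¹ * (1 + t) : ℝ) : ℂ) * ((w - z₀) * a / b) := by
    intro a b
    have ht' : (t : ℂ) ≠ 0 := ofReal_ne_zero.2 ht.ne'
    simp only [w, real_smul, add_sub_cancel_left]
    push_cast
    field_simp
  rw [hw, re_ofReal_mul]
  simp only [w, real_smul, add_sub_cancel_left, mul_assoc]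

theorem stmt_9 (q : ℂ → ℂ)
    (hq : DifferentiableOn ℂ q (ball (0 : ℂ) 1))
    (hq0 : q 0 ≠ 0)
    (hq' : ∀ z ∈ ball (0 : ℂ) 1, deriv q z ≠ 0)
    (hre : ∀ z ∈ ball (0 : ℂ) 1, q z ≠ 0 →
      0 < (1 + z * deriv (deriv q) z / deriv q z - z * deriv q z / q z).re) :
    ∀ z ∈ ball (0 : ℂ) 1, q z ≠ 0 := by
  intro z₀ hz₀ hqz₀
  have hz₀0 : z₀ ≠ 0 := by rintro rfl; exact hq0 hqz₀
  have hnhds : ball (0 : ℂ) 1 ∈ 𝓝 z₀ := isOpen_ball.mem_nhds hz₀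
  have hdiff : DifferentiableAt ℂ q z₀ := hq.differentiableAt hnhds
  have hq₁ : AnalyticOnNhd ℂ (deriv q) (ball (0 : ℂ) 1) := (hq.analyticOnNhd isOpen_ball).deriv
  have hc₁ : ContinuousAt (deriv q) z₀ := (hq₁ z₀ hz₀).continuousAt
  have hc₂ : ContinuousAt (deriv (deriv q)) z₀ := (hq₁.deriv z₀ hz₀).continuousAt
  have hray := (tendsto_add_smul_nhdsNE z₀ hz₀0).mono_left (nhdsGT_le_nhdsNE 0)
  have hcont : ContinuousAt (fun z => (1 + z * deriv (deriv q) z / deriv q z).re) z₀ := by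
    fun_prop (disch := exact hq' z₀ hz₀)
  have hlog := tendsto_re_mul_deriv_div_atTop hdiff hc₁ hqz₀ (hq' z₀ hz₀) hz₀0
  have hneg := (hcont.tendsto.comp (hray.mono_right nhdsWithin_le_nhds)).add_atBot
    (tendsto_neg_atTop_atBot.comp hlog)
  have hin := (hray.mono_right nhdsWithin_le_nhds).eventually hnhds
  have hne := hray.eventually (hdiff.hasDerivAt.eventually_ne (c := 0) (hq' z₀ hz₀))
  obtain ⟨t, hlt, hin, hne⟩ := ((hneg.eventually_lt_atBot 0).and (hin.and hne)).exists
  exact (hre _ hin hne).not_gt (by simpa [sub_eq_add_neg] using hlt)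
end

section
/- The function q_λ(z) = (1-z)^λ = e^{λ log(1-z)} (principal branch) for nonzero complex λ is univalent on the open unit disk if and only if |λ + 1| ≤ 1 or |λ - 1| ≤ 1. -/
/-!
Write `1 - z = exp w`. Then `(1 - z) ^ λ = exp (λ w)` identifies two points exactly when their
logarithms differ by a nonzero integer multiple of `2πi / λ`, whose imaginary part is
`2πn Re(1/λ)`. Since `1 - z` ranges over the disc `|u - 1| < 1`, inside the half-plane `Re u > 0`,
the logarithms have imaginary parts in `(-π/2, π/2)`; so injectivity holds once
`|Re(1/λ)| ≥ 1/2`. Conversely, if `|Re(1/λ)| < 1/2`, the points `exp (x ± πi/λ)` lie in that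
disc for `x` very negative and have the same `λ`-th power. Finally `|λ ± 1| ≤ 1` is
`∓Re(1/λ) ≥ 1/2`.
-/

open Complex Metric Set Real

namespace Complex

theorem norm_add_one_le_one_iff {lam : ℂ} (hlam : lam ≠ 0) :
    ‖lam + 1‖ ≤ 1 ↔ lam⁻¹.re ≤ -1 / 2 := by
  have hS : 0 < normSq lam := normSq_pos.mpr hlam
  have hsq : normSq (lam + 1) = normSq lam + 2 * lam.re + 1 := by
    simp only [normSq_apply, add_re, add_im, one_re, one_im]; ring
  rw [← sq_le_one_iff₀ (norm_nonneg _), Complex.sq_norm, hsq, inv_re, div_le_iff₀ hS]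
  constructor <;> intro h <;> linarith

theorem norm_sub_one_le_one_iff {lam : ℂ} (hlam : lam ≠ 0) :
    ‖lam - 1‖ ≤ 1 ↔ 1 / 2 ≤ lam⁻¹.re := by
  rw [← norm_neg, neg_sub', sub_neg_eq_add, norm_add_one_le_one_iff (neg_ne_zero.mpr hlam),
    inv_neg, neg_re]
  constructor <;> intro h <;> linarith

theorem norm_add_one_le_one_or_norm_sub_one_le_one_iff {lam : ℂ} (hlam : lam ≠ 0) :
    ‖lam + 1‖ ≤ 1 ∨ ‖lam - 1‖ ≤ 1 ↔ 1 / 2 ≤ |lam⁻¹.re| := by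
  rw [norm_add_one_le_one_iff hlam, norm_sub_one_le_one_iff hlam, le_abs', neg_div]

theorem cpow_eq_cpow_iff_exists_int {u v lam : ℂ} (hu : u ≠ 0) (hv : v ≠ 0)
    (hlam : lam ≠ 0) :
    u ^ lam = v ^ lam ↔ ∃ n : ℤ, log u = log v + n * (2 * π * I / lam) := by
  rw [cpow_def_of_ne_zero hu, cpow_def_of_ne_zero hv, exp_eq_exp_iff_exists_int]
  refine exists_congr fun n => ?_
  rw [← mul_left_inj' (a := log u) hlam, add_mul, mul_assoc (n : ℂ), div_mul_cancel₀ _ hlam]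

theorem injOn_cpow_of_half_le_abs_inv_re {lam : ℂ} (h : 1 / 2 ≤ |lam⁻¹.re|) :
    InjOn (· ^ lam) {u : ℂ | 0 < u.re} := by
  have hlam : lam ≠ 0 := by rintro rfl; norm_num at h
  intro u hu v hv huv
  have hu0 : u ≠ 0 := fun h => by simp [h] at hu
  have hv0 : v ≠ 0 := fun h => by simp [h] at hv
  obtain ⟨n, hn⟩ := (cpow_eq_cpow_iff_exists_int hu0 hv0 hlam).1 huv
  rcases eq_or_ne n 0 with rfl | hn0
  · rw [← exp_log hu0, ← exp_log hv0, hn, Int.cast_zero, zero_mul, add_zero]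
  exfalso
  have harg : arg u - arg v = n * (2 * π * lam⁻¹.re) := by
    have := congrArg im hn
    simp only [log_im, add_im, div_eq_mul_inv, mul_im, mul_re, intCast_re, intCast_im, ofReal_re,
      ofReal_im, I_re, I_im, re_ofNat, im_ofNat] at this
    linarith
  have hu' := abs_arg_lt_pi_div_two_iff.2 (Or.inl hu)
  have hv' := abs_arg_lt_pi_div_two_iff.2 (Or.inl hv)
  have hlt : |arg u - arg v| < π := by
    calc |arg u - arg v| ≤ |arg u| + |arg v| := abs_sub _ _
      _ < π := by linarith
  have hn1 : (1 : ℝ) ≤ |(n : ℝ)| := by exact_mod_cast Int.one_le_abs hn0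
  have hge : π ≤ |(n : ℝ) * (2 * π * lam⁻¹.re)| :=
    calc π ≤ 2 * π * |lam⁻¹.re| := by nlinarith [pi_pos]
      _ ≤ |(n : ℝ)| * (2 * π * |lam⁻¹.re|) := le_mul_of_one_le_left (by positivity) hn1
      _ = |(n : ℝ) * (2 * π * lam⁻¹.re)| := by
        rw [abs_mul, abs_mul, abs_of_pos (by positivity : 0 < 2 * π)]
  rw [harg] at hlt
  linarith

theorem exp_mem_ball_one_iff (w : ℂ) :
    exp w ∈ ball (1 : ℂ) 1 ↔ rexp w.re < 2 * Real.cos w.im := by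
  have hsq : normSq (exp w - 1) = rexp w.re * (rexp w.re - 2 * Real.cos w.im) + 1 := by
    simp only [normSq_apply, sub_re, sub_im, exp_re, exp_im, one_re, one_im]
    linear_combination rexp w.re ^ 2 * Real.sin_sq_add_cos_sq w.im
  rw [mem_ball, dist_eq, ← sq_lt_one_iff₀ (norm_nonneg _), Complex.sq_norm, hsq,
    add_lt_iff_neg_right, ← mul_zero (rexp w.re), mul_lt_mul_iff_right₀ (exp_pos w.re), sub_neg]

theorem exists_exp_add_mem_ball_one_and_exp_sub_mem_ball_one {ν : ℂ} (h : |ν.im| < π / 2) :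
    ∃ x : ℝ, exp (x + ν) ∈ ball (1 : ℂ) 1 ∧ exp (x - ν) ∈ ball (1 : ℂ) 1 := by
  have hcos : 0 < Real.cos ν.im := cos_pos_of_mem_Ioo (abs_lt.1 h)
  set x := Real.log (Real.cos ν.im) - |ν.re|
  have hbound (t : ℝ) (ht : t ≤ |ν.re|) : rexp (x + t) < 2 * Real.cos ν.im :=
    calc rexp (x + t) ≤ rexp (Real.log (Real.cos ν.im)) := exp_le_exp.2 (by linarith)
      _ < 2 * Real.cos ν.im := by rw [Real.exp_log hcos]; linarith
  refine ⟨x, ?_, ?_⟩ <;> rw [exp_mem_ball_one_iff]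
  · simpa using hbound ν.re (le_abs_self _)
  · simpa [sub_eq_add_neg] using hbound (-ν.re) (neg_le_abs _)

theorem not_injOn_cpow_ball_one {lam : ℂ} (hlam : lam ≠ 0) (h : |lam⁻¹.re| < 1 / 2) :
    ¬ InjOn (· ^ lam) (ball (1 : ℂ) 1) := by
  set ν : ℂ := π * I / lam with hν
  have hν_im : ν.im = π * lam⁻¹.re := by
    simp [hν, div_eq_mul_inv, mul_im, mul_re]
  have hν_lt : |ν.im| < π / 2 := by
    rw [hν_im, abs_mul, abs_of_pos pi_pos]; nlinarith [pi_pos]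
  obtain ⟨x, h₁, h₂⟩ := exists_exp_add_mem_ball_one_and_exp_sub_mem_ball_one hν_lt
  have hlog (w : ℂ) (hw : |w.im| < π / 2) : log (exp w) = w :=
    log_exp (by linarith [abs_lt.1 hw, pi_pos]) (by linarith [abs_lt.1 hw, pi_pos])
  have hlog₁ : log (exp (x + ν)) = x + ν := hlog _ (by simpa using hν_lt)
  have hlog₂ : log (exp (x - ν)) = x - ν := hlog _ (by simpa using hν_lt)
  have hpow : exp (x + ν) ^ lam = exp (x - ν) ^ lam := by
    refine (cpow_eq_cpow_iff_exists_int (exp_ne_zero _) (exp_ne_zero _) hlam).2 ⟨1, ?_⟩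
    rw [hlog₁, hlog₂, hν]; ring
  intro hinj
  have hν0 : ν ≠ 0 := div_ne_zero (mul_ne_zero (ofReal_ne_zero.2 pi_ne_zero) I_ne_zero) hlam
  have := congrArg log (hinj h₁ h₂ hpow)
  rw [hlog₁, hlog₂] at this
  exact hν0 (by linear_combination this / 2)

theorem ball_one_one_subset_re_pos : ball (1 : ℂ) 1 ⊆ {u : ℂ | 0 < u.re} := by
  intro u hu
  rw [mem_ofPred_eq]
  have := (abs_re_le_norm (u - 1)).trans_lt (by rwa [mem_ball, dist_eq] at hu)
  rw [sub_re, one_re] at this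
  linarith [(abs_lt.1 this).1]

end Complex

theorem stmt_15 (lam : ℂ) (hlam : lam ≠ 0) :
    InjOn (fun z : ℂ => (1 - z) ^ lam) (ball (0 : ℂ) 1) ↔
      ‖lam + 1‖ ≤ 1 ∨ ‖lam - 1‖ ≤ 1 := by
  have himage : (fun z : ℂ => 1 - z) '' ball 0 1 = ball 1 1 := by
    simpa using (IsometryEquiv.subLeft (1 : ℂ)).image_ball 0 1
  rw [norm_add_one_le_one_or_norm_sub_one_le_one_iff hlam,
    ← Function.comp_def (· ^ lam) (fun z : ℂ => 1 - z),
    (sub_right_injective.injOn : InjOn (fun z : ℂ => 1 - z) _).comp_iff, himage]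
  exact ⟨fun h => not_lt.1 fun hlt => not_injOn_cpow_ball_one hlam hlt h,
    fun h => (injOn_cpow_of_half_le_abs_inv_re h).mono ball_one_one_subset_re_pos⟩
end
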